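/- arXiv:1908.03833 — 5 statements merged into one kernel-verified Lean document; each statement's English description precedes it below -/
import Mathlib

section
/- Let $g_n:[0,1]\to[0,1]$, $n\in\mathbb{N}$, satisfy $g_1(x)=2x$ for $x\in[0,1/2)$, $g_1(x)=2-2x$ for $x\in[1/2,1]$, and $g_{n+1}=g_1\circ g_n$. Let $f_n:[0,1]\to[0,1]$, $n\in\mathbb{N}_0$, be the piecewise linear interpolants of $x\mapsto x^2$ at the grid points $k/2^n$, i.e. $f_n(1)=1$ and for $k\in\{0,\dots,2^n-1\}$ and $x\in[k/2^n,(k+1)/2^n)$, $f_n(x)=\frac{2k+1}{2^n}x-\frac{k^2+k}{2^{2n}}$. Then for all $n\in\mathbb{N}_0$ and $x\in[0,1]$ it holds that $f_n(x)=x-\sum_{m=1}^n 2^{-2m}g_m(x)$ and $|x^2-f_n(x)|\le 2^{-2n-2}$. -/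
/-!
The iterates of the tent map are zigzags: `g n x` is the distance from `2 ^ n * x` to the nearest
even integer, because doubling and folding `[0, 1]` is what `t ↦ 2 * t` does to that distance.
On the dyadic cell `[k / 2 ^ n, (k + 1) / 2 ^ n]`, `f n` is the chord of `x ↦ x ^ 2`; halving the
cell lowers the chord by `2⁻¹ ^ (n + 1)` times the distance from `x` to the nearer endpoint of
the coarse cell, which is `4⁻¹ ^ (n + 1) * g (n + 1) x`. Finally `x ^ 2` minus the chord over
`[a, b]` is `(x - a) * (x - b)`, of modulus at most `(b - a) ^ 2 / 4`.
-/

open Set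

noncomputable def tent (y : ℝ) : ℝ := if y < 1/2 then 2 * y else 2 - 2 * y

-- The distance from `t` to the nearest even integer.
noncomputable def zigzag (t : ℝ) : ℝ := if Even ⌊t⌋ then Int.fract t else 1 - Int.fract t

-- The chord of `x ↦ x ^ 2` over `[k / 2 ^ n, (k + 1) / 2 ^ n]`.
noncomputable def squareChord (n k : ℕ) (x : ℝ) : ℝ :=
  (2 * k + 1) / 2 ^ n * x - (k ^ 2 + k) / 2 ^ (2 * n)

theorem zigzag_mem_Icc (t : ℝ) : zigzag t ∈ Icc 0 1 := by
  have h₀ := Int.fract_nonneg t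
  have h₁ := Int.fract_lt_one t
  unfold zigzag
  split_ifs <;> constructor <;> linarith

theorem zigzag_of_mem_Icc {x : ℝ} (hx : x ∈ Icc 0 1) : zigzag x = x := by
  rcases hx.2.eq_or_lt with rfl | hx₁
  · simp [zigzag]
  · have hfl : ⌊x⌋ = 0 := Int.floor_eq_zero_iff.mpr ⟨hx.1, hx₁⟩
    simp [zigzag, Int.fract, hfl]

theorem tent_zigzag (t : ℝ) : tent (zigzag t) = zigzag (2 * t) := by
  have h₀ := Int.fract_nonneg t
  have h₁ := Int.fract_lt_one t
  have ht := Int.floor_add_fract t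
  rcases lt_or_ge (Int.fract t) (1 / 2) with h | h
  · have hfl : ⌊2 * t⌋ = 2 * ⌊t⌋ := by
      rw [Int.floor_eq_iff]; push_cast; constructor <;> linarith
    have hfr : Int.fract (2 * t) = 2 * Int.fract t := by
      rw [Int.fract, hfl]; push_cast; linarith
    simp only [zigzag, tent, hfl, hfr, even_two_mul, if_true]
    split_ifs <;> linarith
  · have hfl : ⌊2 * t⌋ = 2 * ⌊t⌋ + 1 := by
      rw [Int.floor_eq_iff]; push_cast; constructor <;> linarith
    have hfr : Int.fract (2 * t) = 2 * Int.fract t - 1 := by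
      rw [Int.fract, hfl]; push_cast; linarith
    simp only [zigzag, tent, hfl, hfr, Int.not_even_two_mul_add_one, if_false]
    split_ifs <;> linarith

theorem zigzag_of_nonneg {t : ℝ} (ht : 0 ≤ t) :
    zigzag t = if Even ⌊t⌋₊ then t - ⌊t⌋₊ else ⌊t⌋₊ + 1 - t := by
  rw [zigzag, Int.fract, ← Int.natCast_floor_eq_floor ht]
  simp only [Int.even_coe_nat, Int.cast_natCast]
  split_ifs <;> ring

theorem zigzag_intCast_of_even {m : ℤ} (hm : Even m) : zigzag m = 0 := by
  simp [zigzag, hm]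

theorem eq_zigzag_of_tent_iterate {g : ℕ → ℝ → ℝ}
    (hg1 : ∀ x ∈ Icc (0:ℝ) 1, g 1 x = tent x)
    (hgrec : ∀ n, 1 ≤ n → ∀ x ∈ Icc (0:ℝ) 1, g (n + 1) x = g 1 (g n x)) :
    ∀ n, 1 ≤ n → ∀ x ∈ Icc (0:ℝ) 1, g n x = zigzag (2 ^ n * x) := by
  refine Nat.le_induction ?_ fun n hn ih x hx => ?_
  · intro x hx
    rw [hg1 x hx, pow_one, ← tent_zigzag, zigzag_of_mem_Icc hx]
  · rw [hgrec n hn x hx, ih x hx, hg1 _ (zigzag_mem_Icc _), tent_zigzag, pow_succ, mul_comm _ 2,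
      mul_assoc]

theorem abs_sub_mul_sub_le {a b x : ℝ} (ha : a ≤ x) (hb : x ≤ b) :
    |(x - a) * (x - b)| ≤ (b - a) ^ 2 / 4 := by
  rw [abs_of_nonpos (mul_nonpos_of_nonneg_of_nonpos (by linarith) (by linarith))]
  nlinarith [sq_nonneg (2 * x - a - b)]

theorem abs_sq_sub_squareChord_le {n k : ℕ} {x : ℝ} (hl : (k : ℝ) / 2 ^ n ≤ x)
    (hu : x ≤ ((k : ℝ) + 1) / 2 ^ n) :
    |x ^ 2 - squareChord n k x| ≤ ((2 : ℝ) ^ (2 * n + 2))⁻¹ := by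
  have hsplit : x ^ 2 - squareChord n k x = (x - k / 2 ^ n) * (x - (k + 1) / 2 ^ n) := by
    rw [squareChord, pow_mul']; field_simp; ring
  have hwidth : (((k : ℝ) + 1) / 2 ^ n - k / 2 ^ n) ^ 2 / 4 = ((2 : ℝ) ^ (2 * n + 2))⁻¹ := by
    rw [pow_add, pow_mul']; field_simp; ring
  rw [hsplit, ← hwidth]
  exact abs_sub_mul_sub_le hl hu

theorem squareChord_div_two_sub (n k : ℕ) (x : ℝ) :
    squareChord n (k / 2) x - squareChord (n + 1) k x =
      ((2 : ℝ) ^ (2 * (n + 1)))⁻¹ *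
        (if Even k then 2 ^ (n + 1) * x - k else k + 1 - 2 ^ (n + 1) * x) := by
  obtain ⟨j, rfl | rfl⟩ := Nat.even_or_odd' k
  · rw [if_pos (even_two_mul j), Nat.mul_div_cancel_left j two_pos]
    simp only [squareChord, pow_mul', pow_succ]; push_cast; field_simp; ring
  · rw [if_neg (Nat.not_even_two_mul_add_one j), show (2 * j + 1) / 2 = j by omega]
    simp only [squareChord, pow_mul', pow_succ]; push_cast; field_simp; ring

theorem floor_mem_dyadic_cell (n : ℕ) {x : ℝ} (h₀ : 0 ≤ x) (h₁ : x < 1) :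
    ⌊2 ^ n * x⌋₊ < 2 ^ n ∧ (⌊2 ^ n * x⌋₊ : ℝ) / 2 ^ n ≤ x ∧
      x < (⌊2 ^ n * x⌋₊ + 1) / 2 ^ n := by
  have hpos : (0 : ℝ) < 2 ^ n := by positivity
  refine ⟨?_, ?_, ?_⟩
  · rw [Nat.floor_lt (by positivity)]; push_cast; nlinarith
  · rw [div_le_iff₀ hpos, mul_comm x]; exact Nat.floor_le (by positivity)
  · rw [lt_div_iff₀ hpos, mul_comm x]; exact Nat.lt_floor_add_one _

theorem floor_two_pow_succ_mul_div_two (n : ℕ) (x : ℝ) :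
    ⌊2 ^ (n + 1) * x⌋₊ / 2 = ⌊2 ^ n * x⌋₊ := by
  rw [← Nat.floor_div_natCast]; congr 1; push_cast; ring

theorem stmt1_general
    (g : ℕ → ℝ → ℝ)
    (hg1 : ∀ x ∈ Set.Icc (0:ℝ) 1, g 1 x = if x < 1/2 then 2*x else 2 - 2*x)
    (hgrec : ∀ n : ℕ, 1 ≤ n → ∀ x ∈ Set.Icc (0:ℝ) 1, g (n+1) x = g 1 (g n x))
    (f : ℕ → ℝ → ℝ)
    (hf1 : ∀ n : ℕ, f n 1 = 1)
    (hf : ∀ n : ℕ, ∀ k : ℕ, k < 2^n → ∀ x : ℝ,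
      (k : ℝ)/2^n ≤ x → x < ((k:ℝ)+1)/2^n →
        f n x = ((2*(k:ℝ)+1)/2^n) * x - ((k:ℝ)^2 + k)/2^(2*n)) :
    ∀ n : ℕ, ∀ x ∈ Set.Icc (0:ℝ) 1,
      f n x = x - ∑ m ∈ Finset.Icc 1 n, ((2:ℝ)^(2*m))⁻¹ * g m x
      ∧ |x^2 - f n x| ≤ ((2:ℝ)^(2*n+2))⁻¹ := by
  have hg := eq_zigzag_of_tent_iterate hg1 hgrec
  have hstep : ∀ n, ∀ x ∈ Icc (0:ℝ) 1,
      f n x - f (n + 1) x = ((2:ℝ) ^ (2 * (n + 1)))⁻¹ * g (n + 1) x := by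
    intro n x hx
    rw [hg (n + 1) n.succ_pos x hx]
    rcases hx.2.eq_or_lt with rfl | hx₁
    · have : zigzag (2 ^ (n + 1)) = 0 := by
        exact_mod_cast zigzag_intCast_of_even (m := 2 ^ (n + 1)) (by simp [Int.even_pow])
      simp [hf1, this]
    · obtain ⟨hk, hkl, hku⟩ := floor_mem_dyadic_cell (n + 1) hx.1 hx₁
      obtain ⟨hj, hjl, hju⟩ := floor_mem_dyadic_cell n hx.1 hx₁
      rw [hf _ _ hk x hkl hku, hf _ _ hj x hjl hju,
        zigzag_of_nonneg (mul_nonneg (by positivity) hx.1)]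
      exact floor_two_pow_succ_mul_div_two n x ▸ squareChord_div_two_sub n _ x
  intro n x hx
  refine ⟨?_, ?_⟩
  · induction n with
    | zero =>
      rcases hx.2.eq_or_lt with rfl | hx₁
      · simp [hf1]
      · simp [hf 0 0 one_pos x (by simpa using hx.1) (by simpa using hx₁)]
    | succ n ih => rw [Finset.sum_Icc_succ_top (by omega), ← hstep n x hx, ih]; ring
  · rcases hx.2.eq_or_lt with rfl | hx₁
    · simp [hf1]
    · obtain ⟨hk, hkl, hku⟩ := floor_mem_dyadic_cell n hx.1 hx₁
      exact hf n _ hk x hkl hku ▸ abs_sq_sub_squareChord_le hkl hku.le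

theorem stmt1
    (g : ℕ → ℝ → ℝ)
    (hg1 : ∀ x ∈ Set.Icc (0:ℝ) 1, g 1 x = if x < 1/2 then 2*x else 2 - 2*x)
    (hgrec : ∀ n : ℕ, 1 ≤ n → ∀ x ∈ Set.Icc (0:ℝ) 1, g (n+1) x = g 1 (g n x))
    (hgmem : ∀ n : ℕ, 1 ≤ n → ∀ x ∈ Set.Icc (0:ℝ) 1, g n x ∈ Set.Icc (0:ℝ) 1)
    (f : ℕ → ℝ → ℝ)
    (hf1 : ∀ n : ℕ, f n 1 = 1)
    (hf : ∀ n : ℕ, ∀ k : ℕ, k < 2^n → ∀ x : ℝ,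
      (k : ℝ)/2^n ≤ x → x < ((k:ℝ)+1)/2^n →
        f n x = ((2*(k:ℝ)+1)/2^n) * x - ((k:ℝ)^2 + k)/2^(2*n)) :
    ∀ n : ℕ, ∀ x ∈ Set.Icc (0:ℝ) 1,
      f n x = x - ∑ m ∈ Finset.Icc 1 n, ((2:ℝ)^(2*m))⁻¹ * g m x
      ∧ |x^2 - f n x| ≤ ((2:ℝ)^(2*n+2))⁻¹ :=
  stmt1_general g hg1 hgrec f hf1 hf
end

section
/- Let $q\in(2,\infty)$, $\varepsilon,\delta\in(0,1]$ with $\delta=\varepsilon(2^{q-1}+1)^{-1}$, and let $S:\mathbb{R}\to\mathbb{R}$ be a function satisfying $S(0)=0$, $0\le S(x)\le\delta+|x|^2$ for all $x\in\mathbb{R}$, and $|x^2-S(x)|\le\delta\max\{1,|x|^q\}$ for all $x\in\mathbb{R}$. Define $P:\mathbb{R}^2\to\mathbb{R}$ by $P(x,y)=\tfrac{1}{2}S(x+y)-\tfrac{1}{2}S(x)-\tfrac{1}{2}S(y)$. Then (i) $P(x,0)=P(0,x)=0$ for all $x\in\mathbb{R}$, (ii) $|xy-P(x,y)|\le\varepsilon\max\{1,|x|^q,|y|^q\}$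 for all $x,y\in\mathbb{R}$, and (iii) $|P(x,y)|\le\tfrac{3}{2}(\tfrac{\varepsilon}{3}+x^2+y^2)\le 1+2x^2+2y^2$ for all $x,y\in\mathbb{R}$. -/
theorem stmt5 (q ε δ : ℝ) (hq : 2 < q) (hε : ε ∈ Set.Ioc (0:ℝ) 1)
    (hδ : δ ∈ Set.Ioc (0:ℝ) 1) (hδeq : δ = ε * ((2:ℝ)^(q-1) + 1)⁻¹)
    (S : ℝ → ℝ) (hS0 : S 0 = 0)
    (hSb : ∀ x : ℝ, 0 ≤ S x ∧ S x ≤ δ + |x|^2)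
    (hSe : ∀ x : ℝ, |x^2 - S x| ≤ δ * max 1 (|x|^q))
    (P : ℝ → ℝ → ℝ)
    (hP : ∀ x y : ℝ, P x y = S (x+y)/2 - S x/2 - S y/2) :
    (∀ x : ℝ, P x 0 = 0 ∧ P 0 x = 0)
    ∧ (∀ x y : ℝ, |x*y - P x y| ≤ ε * max 1 (max (|x|^q) (|y|^q)))
    ∧ (∀ x y : ℝ, |P x y| ≤ 3/2 * (ε/3 + x^2 + y^2)
        ∧ 3/2 * (ε/3 + x^2 + y^2) ≤ 1 + 2*x^2 + 2*y^2) := by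
  obtain ⟨hε0, hε1⟩ := hε
  obtain ⟨hδ0, hδ1⟩ := hδ
  have hq0 : (0:ℝ) < q := by linarith
  have h2q1pos : (0:ℝ) < (2:ℝ)^(q-1) + 1 := by positivity
  have hεδ : ε = δ * ((2:ℝ)^(q-1) + 1) := by
    rw [hδeq]; field_simp
  have h2q : (2:ℝ)^q = (2:ℝ)^(q-1) * 2 := by
    have h := Real.rpow_sub (by norm_num : (0:ℝ) < 2) q 1
    rw [Real.rpow_one] at h
    field_simp at h
    linarith
  have h2q1 : (1:ℝ) ≤ (2:ℝ)^q := Real.one_le_rpow (by norm_num) hq0.le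
  -- δ ≤ ε/3
  have h3 : (3:ℝ) ≤ (2:ℝ)^(q-1) + 1 := by
    have : (2:ℝ) = (2:ℝ)^(1:ℝ) := (Real.rpow_one 2).symm
    have h2 : (2:ℝ)^(1:ℝ) ≤ (2:ℝ)^(q-1) :=
      Real.rpow_le_rpow_left_iff (by norm_num) |>.mpr (by linarith)
    linarith [this ▸ h2]
  have hδε3 : δ ≤ ε / 3 := by
    rw [hδeq]
    rw [div_eq_mul_inv]
    apply mul_le_mul_of_nonneg_left _ hε0.le
    apply inv_anti₀ (by norm_num) h3
  refine ⟨?_, ?_, ?_⟩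
  · intro x
    constructor <;> simp [hP, hS0] <;> ring
  · intro x y
    set M := max 1 (max (|x|^q) (|y|^q)) with hM
    have hM1 : (1:ℝ) ≤ M := le_max_left _ _
    have hMx : |x|^q ≤ M := le_trans (le_max_left _ _) (le_max_right _ _)
    have hMy : |y|^q ≤ M := le_trans (le_max_right _ _) (le_max_right _ _)
    have hMpos : (0:ℝ) < M := by linarith
    -- |x+y|^q ≤ 2^q * M
    have hxy : |x+y|^q ≤ (2:ℝ)^q * M := by
      have h1 : |x+y| ≤ 2 * max |x| |y| := by
        calc |x+y| ≤ |x| + |y| := abs_add_le x y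
        _ ≤ 2 * max |x| |y| := by
            rcases le_total |x| |y| with h | h
            · rw [max_eq_right h]; linarith
            · rw [max_eq_left h]; linarith
      have h2 : |x+y|^q ≤ (2 * max |x| |y|)^q :=
        Real.rpow_le_rpow (abs_nonneg _) h1 hq0.le
      have h3' : (2 * max |x| |y|)^q = (2:ℝ)^q * (max |x| |y|)^q :=
        Real.mul_rpow (by norm_num) (le_trans (abs_nonneg x) (le_max_left _ _))
      have h4 : (max |x| |y|)^q ≤ M := by
        rcases le_total |x| |y| with h | h
        · rw [max_eq_right h]; exact hMy
        · rw [max_eq_left h]; exact hMx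
      calc |x+y|^q ≤ (2:ℝ)^q * (max |x| |y|)^q := h3' ▸ h2
        _ ≤ (2:ℝ)^q * M := by
            apply mul_le_mul_of_nonneg_left h4 (by positivity)
    have hmxy : max 1 (|x+y|^q) ≤ (2:ℝ)^q * M := by
      apply max_le _ hxy
      nlinarith
    have hA := hSe (x+y)
    have hB := hSe x
    have hC := hSe y
    have hdA : δ * max 1 (|x+y|^q) ≤ δ * ((2:ℝ)^q * M) :=
      mul_le_mul_of_nonneg_left hmxy hδ0.le
    have hdB : δ * max 1 (|x|^q) ≤ δ * M :=
      mul_le_mul_of_nonneg_left (max_le hM1 hMx) hδ0.le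
    have hdC : δ * max 1 (|y|^q) ≤ δ * M :=
      mul_le_mul_of_nonneg_left (max_le hM1 hMy) hδ0.le
    rw [hP]
    have hid : x*y - (S (x+y)/2 - S x/2 - S y/2)
        = ((x+y)^2 - S (x+y))/2 - (x^2 - S x)/2 - (y^2 - S y)/2 := by ring
    rw [hid]
    have key : δ * ((2:ℝ)^q * M) + 2 * (δ * M) ≤ 2 * (ε * M) := by
      rw [hεδ, h2q]; apply le_of_eq; ring
    rw [abs_le] at hA hB hC ⊢
    constructor <;> linarith [hA.1, hA.2, hB.1, hB.2, hC.1, hC.2]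
  · intro x y
    constructor
    · rw [hP]
      have h1 := hSb (x+y)
      have h2 := hSb x
      have h3' := hSb y
      rw [abs_le]
      have hsq : |x+y|^2 = (x+y)^2 := sq_abs _
      have hsx : |x|^2 = x^2 := sq_abs _
      have hsy : |y|^2 = y^2 := sq_abs _
      rw [hsq] at h1; rw [hsx] at h2; rw [hsy] at h3'
      constructor <;> nlinarith [h1.1, h1.2, h2.1, h2.2, h3'.1, h3'.2, sq_nonneg (x+y), sq_nonneg (x-y)]
    · nlinarith [sq_nonneg x, sq_nonneg y]
end

section
/- Let $d\in\mathbb{N}$, $q\in(2,\infty)$, $\varepsilon\in(0,1]$, and let $P:\mathbb{R}^2\to\mathbb{R}$ satisfy for all $x,y\in\mathbb{R}$ that $P(x,0)=P(0,y)=0$, $|xy-P(x,y)|\le\varepsilon\max\{1,|x|^q,|y|^q\}$, and $|P(x,y)|\le 1+2x^2+2y^2$. Define $F:\mathbb{R}^{1+d}\to\mathbb{R}^d$ by $F(t,x)=(P(t,x_1),P(t,x_2),\dots,P(t,x_d))$ for $t\in\mathbb{R}$, $x=(x_1,\dots,x_d)\in\mathbb{R}^d$. Then for all $t\in\mathbb{R}$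 and $x\in\mathbb{R}^d$ it holds (with $\|\cdot\|$ the Euclidean norm) that $\|tx-F(t,x)\|\le\varepsilon(\sqrt{d}\max\{1,|t|^q\}+\|x\|^q)$ and $\|F(t,x)\|\le\sqrt{d}(1+2t^2)+2\|x\|^2$, and $F(t,0)=F(0,x)=0$. -/
open Finset in
lemma minkowski_sqrt {d : ℕ} (a b : Fin d → ℝ) :
    Real.sqrt (∑ i, (a i + b i)^2) ≤ Real.sqrt (∑ i, a i ^2) + Real.sqrt (∑ i, b i ^2) := by
  set A := Real.sqrt (∑ i, a i ^2) with hA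
  set B := Real.sqrt (∑ i, b i ^2) with hB
  have hAnn : 0 ≤ A := Real.sqrt_nonneg _
  have hBnn : 0 ≤ B := Real.sqrt_nonneg _
  have hA2 : A^2 = ∑ i, a i ^2 := Real.sq_sqrt (by positivity)
  have hB2 : B^2 = ∑ i, b i ^2 := Real.sq_sqrt (by positivity)
  have hcs : ∑ i, a i * b i ≤ A * B := Real.sum_mul_le_sqrt_mul_sqrt _ a b
  have h : ∑ i, (a i + b i)^2 ≤ (A + B)^2 := by
    have : ∑ i, (a i + b i)^2 = (∑ i, a i ^2) + 2 * (∑ i, a i * b i) + (∑ i, b i ^2) := by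
      rw [Finset.mul_sum, ← Finset.sum_add_distrib, ← Finset.sum_add_distrib]
      exact Finset.sum_congr rfl fun i _ => by ring
    nlinarith
  calc Real.sqrt (∑ i, (a i + b i)^2) ≤ Real.sqrt ((A+B)^2) := Real.sqrt_le_sqrt h
    _ = A + B := Real.sqrt_sq (by positivity)

lemma sum_rpow_le' {d : ℕ} (a : Fin d → ℝ) (ha : ∀ i, 0 ≤ a i) {q : ℝ} (hq : 1 ≤ q) :
    ∑ i, (a i) ^ q ≤ (∑ i, a i) ^ q := by
  set S := ∑ i, a i with hS
  have hSnn : 0 ≤ S := Finset.sum_nonneg fun i _ => ha i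
  have h1 : ∀ i, (a i) ^ q ≤ a i * S ^ (q - 1) := by
    intro i
    have haS : a i ≤ S := Finset.single_le_sum (fun j _ => ha j) (Finset.mem_univ i)
    calc (a i) ^ q = a i * (a i) ^ (q - 1) := by
          rw [← Real.rpow_one_add' (ha i) (by linarith)]; ring_nf
      _ ≤ a i * S ^ (q - 1) :=
          mul_le_mul_of_nonneg_left (Real.rpow_le_rpow (ha i) haS (by linarith)) (ha i)
  calc ∑ i, (a i) ^ q ≤ ∑ i, a i * S ^ (q - 1) := Finset.sum_le_sum fun i _ => h1 i
    _ = S * S ^ (q - 1) := by rw [← Finset.sum_mul]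
    _ = S ^ q := by rw [← Real.rpow_one_add' hSnn (by linarith)]; ring_nf

lemma rpow_sq_eq (a : ℝ) {q : ℝ} (hq : 0 ≤ q) : (|a| ^ q)^2 = (a^2) ^ q := by
  rw [← Real.rpow_natCast (|a| ^ q) 2, ← Real.rpow_mul (abs_nonneg a), mul_comm,
    Real.rpow_mul (abs_nonneg a), Real.rpow_natCast, sq_abs]

theorem stmt6 (d : ℕ) (hd : 1 ≤ d) (q ε : ℝ) (hq : 2 < q) (hε : ε ∈ Set.Ioc (0:ℝ) 1)
    (P : ℝ → ℝ → ℝ)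
    (hP0 : ∀ x y : ℝ, P x 0 = 0 ∧ P 0 y = 0)
    (hPerr : ∀ x y : ℝ, |x*y - P x y| ≤ ε * max 1 (max (|x|^q) (|y|^q)))
    (hPgr : ∀ x y : ℝ, |P x y| ≤ 1 + 2*x^2 + 2*y^2)
    (F : ℝ → EuclideanSpace ℝ (Fin d) → EuclideanSpace ℝ (Fin d))
    (hF : ∀ (t : ℝ) (x : EuclideanSpace ℝ (Fin d)) (i : Fin d), F t x i = P t (x i)) :
    ∀ (t : ℝ) (x : EuclideanSpace ℝ (Fin d)),
      ‖t • x - F t x‖ ≤ ε * (Real.sqrt d * max 1 (|t|^q) + ‖x‖^q)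
      ∧ ‖F t x‖ ≤ Real.sqrt d * (1 + 2*t^2) + 2*‖x‖^2
      ∧ F t 0 = 0 ∧ F 0 x = 0 := by
  have hε0 : 0 < ε := hε.1
  have hq1 : (1:ℝ) ≤ q := by linarith
  intro t x
  have hnormsq : ‖x‖^2 = ∑ i, (x i)^2 := by
    rw [EuclideanSpace.norm_eq, Real.sq_sqrt (by positivity)]
    simp [Real.norm_eq_abs, sq_abs]
  have hnormnn : (0:ℝ) ≤ ‖x‖ := norm_nonneg x
  -- key: sqrt of sum of (|x i|^q)^2 ≤ ‖x‖^q
  have hxq : Real.sqrt (∑ i, (|x i| ^ q)^2) ≤ ‖x‖ ^ q := by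
    have h1 : ∑ i, (|x i| ^ q)^2 = ∑ i, ((x i)^2) ^ q :=
      Finset.sum_congr rfl fun i _ => rpow_sq_eq (x i) (by linarith)
    have h2 : ∑ i, ((x i)^2) ^ q ≤ (∑ i, (x i)^2) ^ q :=
      sum_rpow_le' _ (fun i => sq_nonneg _) hq1
    have h3 : Real.sqrt ((∑ i, (x i)^2) ^ q) = ‖x‖ ^ q := by
      rw [← hnormsq, ← Real.rpow_natCast ‖x‖ 2, ← Real.rpow_mul hnormnn, mul_comm,
        Real.rpow_mul hnormnn, Real.rpow_natCast]
      rw [Real.sqrt_eq_rpow, ← Real.rpow_natCast (‖x‖ ^ q) 2, ← Real.rpow_mul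
        (Real.rpow_nonneg hnormnn q)]
      norm_num
    rw [h1]
    exact (Real.sqrt_le_sqrt h2).trans h3.le
  -- sqrt of sum of constants
  have hconst : ∀ c : ℝ, 0 ≤ c → Real.sqrt (∑ _i : Fin d, c^2) = Real.sqrt d * c := by
    intro c hc
    rw [Finset.sum_const, Finset.card_univ, Fintype.card_fin, nsmul_eq_mul,
      Real.sqrt_mul (by positivity), Real.sqrt_sq hc]
  set M := max 1 (|t|^q) with hM
  have hM1 : (1:ℝ) ≤ M := le_max_left _ _
  have hM0 : (0:ℝ) ≤ M := by linarith
  refine ⟨?_, ?_, ?_, ?_⟩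
  · -- first estimate
    have hcomp : ∀ i, |(t • x - F t x) i| ≤ ε * (M + |x i|^q) := by
      intro i
      have : (t • x - F t x) i = t * x i - P t (x i) := by
        simp [hF, PiLp.smul_apply, smul_eq_mul]
      rw [this]
      refine (hPerr t (x i)).trans ?_
      apply mul_le_mul_of_nonneg_left _ hε0.le
      have hx0 : 0 ≤ |x i|^q := Real.rpow_nonneg (abs_nonneg _) q
      exact max_le (by linarith) (max_le (by linarith [le_max_right (1:ℝ) (|t|^q)]) (by linarith))
    calc ‖t • x - F t x‖ = Real.sqrt (∑ i, ‖(t • x - F t x) i‖^2) := EuclideanSpace.norm_eq _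
      _ ≤ Real.sqrt (∑ i, (ε * M + ε * |x i|^q)^2) := by
          apply Real.sqrt_le_sqrt
          apply Finset.sum_le_sum
          intro i _
          have h := hcomp i
          have hx0 : 0 ≤ |x i|^q := Real.rpow_nonneg (abs_nonneg _) q
          rw [Real.norm_eq_abs]
          nlinarith [abs_nonneg ((t • x - F t x) i), sq_abs ((t • x - F t x) i)]
      _ ≤ Real.sqrt (∑ _i : Fin d, (ε*M)^2) + Real.sqrt (∑ i, (ε * |x i|^q)^2) :=
          minkowski_sqrt _ _
      _ ≤ Real.sqrt d * (ε * M) + ε * (‖x‖^q) := by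
          rw [hconst (ε*M) (by positivity)]
          gcongr
          have heq : ∑ i, (ε * |x i|^q)^2 = ε^2 * ∑ i, (|x i|^q)^2 := by
            rw [Finset.mul_sum]; exact Finset.sum_congr rfl fun i _ => by ring
          rw [heq, Real.sqrt_mul (by positivity), Real.sqrt_sq hε0.le]
          exact mul_le_mul_of_nonneg_left hxq hε0.le
      _ = ε * (Real.sqrt d * M + ‖x‖^q) := by ring
  · -- growth estimate
    have hcomp : ∀ i, |F t x i| ≤ (1 + 2*t^2) + 2*(x i)^2 := by
      intro i; rw [hF]; linarith [hPgr t (x i)]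
    calc ‖F t x‖ = Real.sqrt (∑ i, ‖F t x i‖^2) := EuclideanSpace.norm_eq _
      _ ≤ Real.sqrt (∑ i, ((1 + 2*t^2) + 2*(x i)^2)^2) := by
          apply Real.sqrt_le_sqrt
          apply Finset.sum_le_sum
          intro i _
          have h := hcomp i
          rw [Real.norm_eq_abs]
          nlinarith [abs_nonneg (F t x i), sq_abs (F t x i), sq_nonneg (x i), sq_nonneg t]
      _ ≤ Real.sqrt (∑ _i : Fin d, (1+2*t^2)^2) + Real.sqrt (∑ i, (2*(x i)^2)^2) :=
          minkowski_sqrt _ _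
      _ ≤ Real.sqrt d * (1 + 2*t^2) + 2*‖x‖^2 := by
          rw [hconst (1+2*t^2) (by positivity)]
          gcongr
          have heq : ∑ i, (2*(x i)^2)^2 = 4 * ∑ i, ((x i)^2)^2 := by
            rw [Finset.mul_sum]; exact Finset.sum_congr rfl fun i _ => by ring
          have h4 : Real.sqrt 4 = 2 := by
            rw [show (4:ℝ) = 2^2 by norm_num, Real.sqrt_sq (by norm_num)]
          rw [heq, Real.sqrt_mul (by norm_num), h4, hnormsq]
          have hle : ∑ i, ((x i)^2)^2 ≤ (∑ i, (x i)^2)^2 :=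
            Finset.sum_sq_le_sq_sum_of_nonneg (fun i _ => sq_nonneg _)
          have := Real.sqrt_le_sqrt hle
          rw [Real.sqrt_sq (by positivity)] at this
          linarith
  · ext i; simp [hF, (hP0 t 0).1]
  · ext i; simp [hF, (hP0 0 (x i)).2]
end

section
/- Let $N,d\in\mathbb{N}$, $c,C\in[0,\infty)$, let $A_1,\dots,A_N\in\mathbb{R}^{d\times d}$, let $\|\cdot\|$ be a norm on $\mathbb{R}^d$ with induced operator norm $|||A|||=\sup_{\|x\|\le 1}\|Ax\|$, let $\mu:\mathbb{R}^d\to\mathbb{R}^d$ satisfy $\|\mu(x)\|\le C+c\|x\|$ for all $x$, and define recursively $Y_0^{x,y}=x$ and $Y_{n+1}^{x,y}=Y_n^{x,y}+A_{n+1}\mu(Y_n^{x,y})+y_{n+1}$ for $n\in\{0,\dots,N-1\}$, $x\in\mathbb{R}^d$, $y=(y_1,\dots,y_N)\in(\mathbb{R}^d)^N$. Then for all $n\in\{0,\dots,N\}$ it holds that $\|Y_n^{x,y}\|\le\Big(\|x\|+C\sum_{k=1}^n|||A_k|||+\max_{m\in\{0,\dots,n\}}\big\|\sum_{k=1}^m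 y_k\big\|\Big)\exp\big(c\sum_{k=1}^n|||A_k|||\big)$. -/
/-!
Subtracting the cumulated perturbations `S m = y 1 + ⋯ + y m`, the error `Z m = Y m - S m`
follows the unperturbed scheme `Z (m+1) = Z m + A (m+1) μ (Y m)`, and `‖Y m‖ ≤ ‖Z m‖ + max ‖S k‖`.
Hence `w m = ‖Z m‖ + max ‖S k‖` satisfies `w (m+1) ≤ w m + |||A (m+1)||| (C + c w m)`, and a
discrete Gronwall inequality gives the bound. The operator norm defined by a supremum is finite and
compatible with `‖·‖` because on a finite-dimensional space every seminorm is dominated by a norm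
(convex functions are continuous, and a norm is bounded below on the unit sphere).
-/

open Finset

namespace Seminorm

section FiniteDimensional

variable {E : Type*} [NormedAddCommGroup E] [NormedSpace ℝ E] [FiniteDimensional ℝ E]

theorem continuous_of_finiteDimensional (p : Seminorm ℝ E) : Continuous p :=
  continuousOn_univ.mp <| by simpa using p.convexOn.continuousOn_interior

theorem exists_pos_mul_norm_le (p : Seminorm ℝ E) (hp : ∀ v, p v = 0 → v = 0) :
    ∃ ε > 0, ∀ v, ε * ‖v‖ ≤ p v := by
  rcases subsingleton_or_nontrivial E with _ | _
  · exact ⟨1, one_pos, fun v => by simp [Subsingleton.elim v 0]⟩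
  obtain ⟨u, hu, hmin⟩ := (isCompact_sphere (0 : E) 1).exists_isMinOn
    (NormedSpace.sphere_nonempty.mpr zero_le_one) p.continuous_of_finiteDimensional.continuousOn
  have hu1 : ‖u‖ = 1 := by simpa using hu
  have hpu : 0 < p u := (apply_nonneg p u).lt_of_ne' fun h => by simp [hp u h] at hu1
  refine ⟨p u, hpu, fun v => ?_⟩
  rcases eq_or_ne v 0 with rfl | hv
  · simp
  have hvn : 0 < ‖v‖ := norm_pos_iff.mpr hv
  have hmem : ‖v‖⁻¹ • v ∈ Metric.sphere (0 : E) 1 := by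
    simp [norm_smul, hvn.ne']
  have h := hmin hmem
  rw [Set.mem_ofPred_eq, map_smul_eq_mul, norm_inv, norm_norm] at h
  calc p u * ‖v‖ ≤ ‖v‖⁻¹ * p v * ‖v‖ := by gcongr
    _ = p v := by field_simp

theorem exists_le_mul_of_definite (p r : Seminorm ℝ E) (hp : ∀ v, p v = 0 → v = 0) :
    ∃ K, ∀ v, r v ≤ K * p v := by
  obtain ⟨M, hM0, hM⟩ := r.bound_of_continuous_normedSpace r.continuous_of_finiteDimensional
  obtain ⟨ε, hε, hεp⟩ := p.exists_pos_mul_norm_le hp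
  refine ⟨M / ε, fun v => (hM v).trans ?_⟩
  rw [div_mul_eq_mul_div, le_div_iff₀ hε, mul_assoc]
  gcongr
  linarith [hεp v]

end FiniteDimensional

section UnitBall

variable {E : Type*} [AddCommGroup E] [Module ℝ E]

noncomputable def supOnUnitBall (p r : Seminorm ℝ E) : ℝ := sSup {s | ∃ v, p v ≤ 1 ∧ s = r v}

variable {p r : Seminorm ℝ E} {K : ℝ}

theorem bddAbove_of_le_mul (hK : ∀ v, r v ≤ K * p v) :
    BddAbove {s | ∃ v, p v ≤ 1 ∧ s = r v} := by
  refine ⟨|K|, ?_⟩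
  rintro _ ⟨v, hv, rfl⟩
  nlinarith [hK v, le_abs_self K, abs_nonneg K, apply_nonneg p v]

theorem supOnUnitBall_nonneg (hK : ∀ v, r v ≤ K * p v) : 0 ≤ p.supOnUnitBall r :=
  le_csSup (bddAbove_of_le_mul hK) ⟨0, by simp, by simp⟩

theorem le_supOnUnitBall_mul (hK : ∀ v, r v ≤ K * p v) (v : E) :
    r v ≤ p.supOnUnitBall r * p v := by
  rcases (apply_nonneg p v).eq_or_lt with hv | hv
  · rw [← hv, mul_zero]
    simpa [← hv] using hK v
  have hunit : p ((p v)⁻¹ • v) ≤ 1 := by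
    rw [map_smul_eq_mul, norm_inv, Real.norm_of_nonneg hv.le, inv_mul_cancel₀ hv.ne']
  have h := le_csSup (bddAbove_of_le_mul hK) ⟨_, hunit, rfl⟩
  rw [map_smul_eq_mul, norm_inv, Real.norm_of_nonneg hv.le, inv_mul_le_iff₀ hv] at h
  rwa [mul_comm] at h

end UnitBall

end Seminorm

theorem discrete_gronwall_of_lt {u b c : ℕ → ℝ} (hu0 : ∀ m, 0 ≤ u m) (hc : ∀ m, 0 ≤ c m)
    (hb : ∀ m, 0 ≤ b m) {n : ℕ} (hu : ∀ m < n, u (m + 1) ≤ (1 + c m) * u m + b m) :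
    u n ≤ (u 0 + ∑ k ∈ range n, b k) * Real.exp (∑ k ∈ range n, c k) := by
  -- Freezing `u` at time `n` makes the recursion hold for every `m`, as `discrete_gronwall` needs.
  have hstop : ∀ m ≥ 0, u (min (m + 1) n) ≤ (1 + c m) * u (min m n) + b m := fun m _ => by
    rcases lt_or_ge m n with hm | hm
    · rw [min_eq_left hm, min_eq_left hm.le]
      exact hu m hm
    · rw [min_eq_right hm, min_eq_right (by omega)]
      nlinarith [hu0 n, hc m, hb m]
  have := discrete_gronwall (u := fun m => u (min m n)) (hu0 _) hstop (fun m _ => hc m)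
      (fun m _ => hb m) n.zero_le
  simpa only [min_self, Nat.zero_min, range_eq_Ico] using this

theorem Seminorm.perturbed_euler_apriori_bound {E : Type*} [AddCommGroup E] [Module ℝ E]
    (p : Seminorm ℝ E) {c C : ℝ} (hc : 0 ≤ c) (hC : 0 ≤ C) {F : ℕ → E → E} {L : ℕ → ℝ}
    (hL : ∀ k, 0 ≤ L k) (hF : ∀ k v, p (F k v) ≤ L k * (C + c * p v)) {Y y : ℕ → E} {n : ℕ}
    (hY : ∀ m < n, Y (m + 1) = Y m + F (m + 1) (Y m) + y (m + 1)) :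
    p (Y n) ≤ (p (Y 0) + C * ∑ k ∈ Icc 1 n, L k
        + (range (n + 1)).sup' nonempty_range_add_one fun m => p (∑ k ∈ Icc 1 m, y k))
      * Real.exp (c * ∑ k ∈ Icc 1 n, L k) := by
  set S := fun m => ∑ k ∈ Icc 1 m, y k
  set M := (range (n + 1)).sup' nonempty_range_add_one fun m => p (S m)
  have hS : ∀ m ≤ n, p (S m) ≤ M := fun m hm => le_sup' (fun m => p (S m)) (by simp; omega)
  have hYS : ∀ m ≤ n, p (Y m) ≤ p (Y m - S m) + M := fun m hm =>
    (sub_add_cancel (Y m) (S m) ▸ map_add_le_add p _ _).trans (by linarith [hS m hm])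
  have hstep : ∀ m < n, p (Y (m + 1) - S (m + 1)) + M ≤
      (1 + c * L (m + 1)) * (p (Y m - S m) + M) + C * L (m + 1) := by
    intro m hm
    have hZ : Y (m + 1) - S (m + 1) = Y m - S m + F (m + 1) (Y m) := by
      rw [hY m hm, show S (m + 1) = S m + y (m + 1) from sum_Icc_succ_top m.succ_pos _]
      abel
    have := mul_le_mul_of_nonneg_left (mul_le_mul_of_nonneg_left (hYS m hm.le) hc) (hL (m + 1))
    rw [hZ]
    linarith [map_add_le_add p (Y m - S m) (F (m + 1) (Y m)), hF (m + 1) (Y m)]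
  have hM0 : 0 ≤ M := (apply_nonneg _ _).trans (hS 0 n.zero_le)
  have hshift : ∑ k ∈ range n, L (k + 1) = ∑ k ∈ Icc 1 n, L k := by
    rw [range_eq_Ico, sum_Ico_add' L, zero_add, Ico_add_one_right_eq_Icc]
  have := discrete_gronwall_of_lt (u := fun m => p (Y m - S m) + M)
    (fun m => add_nonneg (apply_nonneg _ _) hM0) (fun m => mul_nonneg hc (hL _))
    (fun m => mul_nonneg hC (hL _)) hstep
  rw [← mul_sum, ← mul_sum, hshift] at this
  have hS0 : S 0 = 0 := by simp [S]
  simp only [hS0, sub_zero] at this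
  linarith [hYS n le_rfl]

theorem stmt9_general (N d : ℕ)
    (c C : ℝ) (hc : 0 ≤ c) (hC : 0 ≤ C)
    (A : ℕ → Matrix (Fin d) (Fin d) ℝ)
    (nm : (Fin d → ℝ) → ℝ)
    (hnmeq0 : ∀ v, nm v = 0 → v = 0)
    (hnmadd : ∀ v w, nm (v + w) ≤ nm v + nm w)
    (hnmsmul : ∀ (t : ℝ) v, nm (t • v) = |t| * nm v)
    (op : Matrix (Fin d) (Fin d) ℝ → ℝ)
    (hop : ∀ B, op B = sSup {s : ℝ | ∃ v, nm v ≤ 1 ∧ s = nm (B.mulVec v)})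
    (μ : (Fin d → ℝ) → Fin d → ℝ)
    (hμ : ∀ v, nm (μ v) ≤ C + c * nm v)
    (Y : (Fin d → ℝ) → (ℕ → Fin d → ℝ) → ℕ → Fin d → ℝ)
    (hY0 : ∀ x y, Y x y 0 = x)
    (hYrec : ∀ x y n, n < N →
      Y x y (n+1) = Y x y n + (A (n+1)).mulVec (μ (Y x y n)) + y (n+1)) :
    ∀ x y n, n ≤ N →
      nm (Y x y n) ≤
        (nm x + C * (∑ k ∈ Finset.Icc 1 n, op (A k))
          + (Finset.range (n+1)).sup' Finset.nonempty_range_add_one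
              (fun m => nm (∑ k ∈ Finset.Icc 1 m, y k)))
        * Real.exp (c * ∑ k ∈ Finset.Icc 1 n, op (A k)) := by
  let p : Seminorm ℝ (Fin d → ℝ) := .of nm hnmadd fun t v => by rw [hnmsmul, Real.norm_eq_abs]
  have hop_le : ∀ B v, 0 ≤ op B ∧ nm (B.mulVec v) ≤ op B * nm v := by
    intro B v
    obtain ⟨K, hK⟩ := p.exists_le_mul_of_definite (p.comp B.mulVecLin) hnmeq0
    rw [hop B]
    exact ⟨Seminorm.supOnUnitBall_nonneg hK, Seminorm.le_supOnUnitBall_mul hK v⟩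
  intro x y n hn
  have hF : ∀ k v, nm ((A k).mulVec (μ v)) ≤ op (A k) * (C + c * nm v) := fun k v =>
    (hop_le (A k) (μ v)).2.trans (mul_le_mul_of_nonneg_left (hμ v) (hop_le (A k) 0).1)
  have h := p.perturbed_euler_apriori_bound hc hC (fun k => (hop_le (A k) 0).1) hF
    (Y := Y x y) (y := y) (n := n) fun m hm => hYrec x y m (by omega)
  rwa [hY0] at h

theorem stmt9 (N d : ℕ) (hN : 1 ≤ N) (hd : 1 ≤ d)
    (c C : ℝ) (hc : 0 ≤ c) (hC : 0 ≤ C)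
    (A : ℕ → Matrix (Fin d) (Fin d) ℝ)
    (nm : (Fin d → ℝ) → ℝ)
    (hnm0 : ∀ v, 0 ≤ nm v)
    (hnmeq0 : ∀ v, nm v = 0 → v = 0)
    (hnmadd : ∀ v w, nm (v + w) ≤ nm v + nm w)
    (hnmsmul : ∀ (t : ℝ) v, nm (t • v) = |t| * nm v)
    (op : Matrix (Fin d) (Fin d) ℝ → ℝ)
    (hop : ∀ B, op B = sSup {s : ℝ | ∃ v, nm v ≤ 1 ∧ s = nm (B.mulVec v)})
    (μ : (Fin d → ℝ) → Fin d → ℝ)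
    (hμ : ∀ v, nm (μ v) ≤ C + c * nm v)
    (Y : (Fin d → ℝ) → (ℕ → Fin d → ℝ) → ℕ → Fin d → ℝ)
    (hY0 : ∀ x y, Y x y 0 = x)
    (hYrec : ∀ x y n, n < N →
      Y x y (n+1) = Y x y n + (A (n+1)).mulVec (μ (Y x y n)) + y (n+1)) :
    ∀ x y n, n ≤ N →
      nm (Y x y n) ≤
        (nm x + C * (∑ k ∈ Finset.Icc 1 n, op (A k))
          + (Finset.range (n+1)).sup' Finset.nonempty_range_add_one
              (fun m => nm (∑ k ∈ Finset.Icc 1 m, y k)))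
        * Real.exp (c * ∑ k ∈ Finset.Icc 1 n, op (A k)) :=
  stmt9_general N d c C hc hC A nm hnmeq0 hnmadd hnmsmul op hop μ hμ Y hY0 hYrec
end

section
/- Define $r_k=(r_{k,1},r_{k,2},r_{k,3},r_{k,4}):\mathbb{R}\to\mathbb{R}^4$ recursively by $r_1(x)=(a(x),a(x-\tfrac12),a(x-1),a(x))$ and $r_{k+1}(x)$ equal to the componentwise ReLU applied to $A_{k+1}r_k(x)+b_{k+1}$, where $a(x)=\max\{x,0\}$, $b_k=(0,-\tfrac12,-1,0)^\top$, and $A_k$ has rows $(2,-4,2,0)$, $(2,-4,2,0)$, $(2,-4,2,0)$, $((-2)^{3-2k},2^{4-2k},(-2)^{3-2k},1)$. Let $g_n$ be the tent-map iterates and $f_n$ the dyadic interpolants of the square on $[0,1]$ as above. Then for all $k\in\mathbb{N}$ and $x\in\mathbb{R}$ it holds that $2r_{k,1}(x)-4r_{k,2}(x)+2r_{k,3}(x)=g_k(x)$, and $r_{k,4}(x)=f_{k-1}(x)$ for $x\in[0,1]$ while $r_{k,4}(x)=\max\{x,0\}$ for $x\in\mathbb{R}\setminus[0,1]$. -/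
lemma tent_id (g : ℕ → ℝ → ℝ)
    (hg1 : ∀ x : ℝ, g 1 x =
      if 0 ≤ x ∧ x < 1/2 then 2*x else if 1/2 ≤ x ∧ x ≤ 1 then 2 - 2*x else 0)
    (y : ℝ) :
    2 * max y 0 - 4 * max (y - 1/2) 0 + 2 * max (y - 1) 0 = g 1 y := by
  rw [hg1]
  rcases lt_or_ge y 0 with h0 | h0
  · rw [max_eq_right (by linarith), max_eq_right (by linarith), max_eq_right (by linarith)]
    split_ifs with h1 h2 <;> [linarith [h1.1]; linarith [h2.1]; ring]
  rcases lt_or_ge y (1/2) with h1 | h1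
  · rw [max_eq_left h0, max_eq_right (by linarith), max_eq_right (by linarith)]
    rw [if_pos ⟨h0, h1⟩]; ring
  rcases le_or_gt y 1 with h2 | h2
  · rw [max_eq_left h0, max_eq_left (by linarith), max_eq_right (by linarith)]
    rw [if_neg (by intro h; linarith [h.2]), if_pos ⟨h1, h2⟩]; ring
  · rw [max_eq_left h0, max_eq_left (by linarith), max_eq_left (by linarith)]
    rw [if_neg (by intro h; linarith [h.2]), if_neg (by intro h; linarith [h.2])]; ring


lemma gExplicit (g : ℕ → ℝ → ℝ)
    (hg1 : ∀ x : ℝ, g 1 x =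
      if 0 ≤ x ∧ x < 1/2 then 2*x else if 1/2 ≤ x ∧ x ≤ 1 then 2 - 2*x else 0)
    (hgrec : ∀ n : ℕ, 1 ≤ n → ∀ x : ℝ, g (n+1) x = g 1 (g n x)) :
    ∀ n : ℕ, 1 ≤ n → ∀ j : ℕ, j < 2^n → ∀ x : ℝ,
      (j:ℝ)/2^n ≤ x → x < ((j:ℝ)+1)/2^n →
      g n x = if Even j then 2^n * x - j else ((j:ℝ)+1) - 2^n * x := by
  have hvA : ∀ y : ℝ, 0 ≤ y → y < 1/2 → g 1 y = 2*y := by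
    intro y h1 h2; rw [hg1, if_pos ⟨h1, h2⟩]
  have hvB : ∀ y : ℝ, 1/2 ≤ y → y ≤ 1 → g 1 y = 2 - 2*y := by
    intro y h1 h2; rw [hg1]
    split_ifs with h3 h4
    · linarith [h3.2]
    · ring
    · exact absurd ⟨h1, h2⟩ h4
  intro n hn
  induction n, hn using Nat.le_induction with
  | base =>
    intro j hj x hx1 hx2
    interval_cases j
    · have h1 : (0:ℝ) ≤ x := by norm_num at hx1; linarith
      have h2 : x < 1/2 := by norm_num at hx2; linarith
      rw [hvA x h1 h2, if_pos Even.zero]; push_cast; ring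
    · have h1 : (1:ℝ)/2 ≤ x := by norm_num at hx1; linarith
      have h2 : x ≤ 1 := by norm_num at hx2; linarith
      rw [hvB x h1 h2, if_neg (by decide : ¬ Even 1)]; push_cast; ring
  | succ n hn ih =>
    intro j hj x hx1 hx2
    have h2n : (0:ℝ) < 2^n := by positivity
    have h2n1 : (0:ℝ) < 2^(n+1) := by positivity
    rw [div_le_iff₀ h2n1] at hx1
    rw [lt_div_iff₀ h2n1] at hx2
    have hp : (2:ℝ)^(n+1) = 2 * 2^n := by ring
    obtain ⟨q, rfl | rfl⟩ := Nat.even_or_odd' j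
    · -- j = 2q
      have hq : q < 2^n := by rw [pow_succ] at hj; omega
      have hgn : g n x = if Even q then 2^n * x - q else ((q:ℝ)+1) - 2^n * x := by
        apply ih q hq x
        · rw [div_le_iff₀ h2n]; push_cast at hx1 ⊢; nlinarith
        · rw [lt_div_iff₀ h2n]; push_cast at hx2 ⊢; nlinarith
      rw [hgrec n hn, hgn]
      push_cast at hx1 hx2 ⊢
      rcases Nat.even_or_odd q with hq2 | hq2
      · rw [if_pos hq2, hvA _ (by nlinarith) (by nlinarith), if_pos (even_two_mul q)]
        ring
      · rw [if_neg (Nat.not_even_iff_odd.mpr hq2), hvB _ (by nlinarith) (by nlinarith),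
          if_pos (even_two_mul q)]
        ring
    · -- j = 2q+1
      have hq : q < 2^n := by rw [pow_succ] at hj; omega
      have hgn : g n x = if Even q then 2^n * x - q else ((q:ℝ)+1) - 2^n * x := by
        apply ih q hq x
        · rw [div_le_iff₀ h2n]; push_cast at hx1 ⊢; nlinarith
        · rw [lt_div_iff₀ h2n]; push_cast at hx2 ⊢; nlinarith
      rw [hgrec n hn, hgn]
      have hodd : ¬ Even (2*q+1) := by simp [Nat.even_iff, Nat.add_mod, Nat.mul_mod]
      push_cast at hx1 hx2 ⊢
      rcases Nat.even_or_odd q with hq2 | hq2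
      · rw [if_pos hq2, hvB _ (by nlinarith) (by nlinarith), if_neg hodd]
        ring
      · rw [if_neg (Nat.not_even_iff_odd.mpr hq2), if_neg hodd]
        rcases lt_or_ge ((q:ℝ) + 1 - 2^n * x) (1/2) with hc | hc
        · rw [hvA _ (by nlinarith) hc]; ring
        · rw [hvB _ hc (by nlinarith)]
          have h5 : (q:ℝ) + 1 - 2^n * x ≤ 1/2 := by nlinarith
          rw [hp]; linarith


lemma gZero (g : ℕ → ℝ → ℝ)
    (hg1 : ∀ x : ℝ, g 1 x =
      if 0 ≤ x ∧ x < 1/2 then 2*x else if 1/2 ≤ x ∧ x ≤ 1 then 2 - 2*x else 0)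
    (hgrec : ∀ n : ℕ, 1 ≤ n → ∀ x : ℝ, g (n+1) x = g 1 (g n x)) :
    ∀ n : ℕ, 1 ≤ n → ∀ x : ℝ, (x < 0 ∨ 1 ≤ x) → g n x = 0 := by
  have h0 : ∀ x : ℝ, (x < 0 ∨ 1 ≤ x) → g 1 x = 0 := by
    intro x hx
    rw [hg1]
    rcases hx with hx | hx
    · rw [if_neg (by intro h; linarith [h.1]), if_neg (by intro h; linarith [h.1])]
    · rcases eq_or_lt_of_le hx with rfl | hx
      · rw [if_neg (by intro h; linarith [h.2]), if_pos ⟨by norm_num, le_refl 1⟩]; ring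
      · rw [if_neg (by intro h; linarith [h.2]), if_neg (by intro h; linarith [h.2])]
  intro n hn
  induction n, hn using Nat.le_induction with
  | base => exact h0
  | succ n hn ih =>
    intro x hx
    rw [hgrec n hn, ih x hx, hg1, if_pos ⟨le_refl 0, by norm_num⟩]
    ring

lemma fRec (g : ℕ → ℝ → ℝ)
    (hg1 : ∀ x : ℝ, g 1 x =
      if 0 ≤ x ∧ x < 1/2 then 2*x else if 1/2 ≤ x ∧ x ≤ 1 then 2 - 2*x else 0)
    (hgrec : ∀ n : ℕ, 1 ≤ n → ∀ x : ℝ, g (n+1) x = g 1 (g n x))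
    (f : ℕ → ℝ → ℝ)
    (hf1 : ∀ n : ℕ, f n 1 = 1)
    (hf : ∀ n : ℕ, ∀ k : ℕ, k < 2^n → ∀ x : ℝ,
      (k : ℝ)/2^n ≤ x → x < ((k:ℝ)+1)/2^n →
        f n x = ((2*(k:ℝ)+1)/2^n) * x - ((k:ℝ)^2 + k)/2^(2*n)) :
    ∀ n : ℕ, ∀ x ∈ Set.Icc (0:ℝ) 1,
      f (n+1) x = f n x - g (n+1) x / 2^(2*(n+1)) := by
  intro n x hx
  obtain ⟨hx0, hx1⟩ := hx
  rcases eq_or_lt_of_le hx1 with rfl | hx1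
  · rw [hf1, hf1, gZero g hg1 hgrec (n+1) (by omega) 1 (Or.inr le_rfl)]
    ring
  · have h2n : (0:ℝ) < 2^n := by positivity
    have h2n1 : (0:ℝ) < 2^(n+1) := by positivity
    obtain ⟨j, hjle, hjlt⟩ : ∃ j : ℕ, (j:ℝ) ≤ 2^(n+1) * x ∧ 2^(n+1) * x < (j:ℝ) + 1 :=
      ⟨⌊2^(n+1) * x⌋₊, Nat.floor_le (by positivity), Nat.lt_floor_add_one _⟩
    have hp : (2:ℝ)^(n+1) = 2 * 2^n := by ring
    rw [hp] at hjle hjlt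
    have hjb : j < 2^(n+1) := by
      have h2 : (j:ℝ) < 2^(n+1) := by rw [hp]; nlinarith
      exact_mod_cast (by push_cast at h2 ⊢; exact h2 : (j:ℝ) < ((2^(n+1) : ℕ) : ℝ))
    have hfx1 : f (n+1) x = ((2*(j:ℝ)+1)/2^(n+1)) * x - ((j:ℝ)^2 + j)/2^(2*(n+1)) := by
      apply hf (n+1) j hjb x
      · rw [div_le_iff₀ h2n1, hp]; linarith
      · rw [lt_div_iff₀ h2n1, hp]; linarith
    have hgx : g (n+1) x = if Even j then 2^(n+1) * x - j else ((j:ℝ)+1) - 2^(n+1) * x := by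
      apply gExplicit g hg1 hgrec (n+1) (by omega) j hjb x
      · rw [div_le_iff₀ h2n1, hp]; linarith
      · rw [lt_div_iff₀ h2n1, hp]; linarith
    obtain ⟨q, rfl | rfl⟩ := Nat.even_or_odd' j
    · have hq : q < 2^n := by rw [pow_succ] at hjb; omega
      have hfx0 : f n x = ((2*(q:ℝ)+1)/2^n) * x - ((q:ℝ)^2 + q)/2^(2*n) := by
        apply hf n q hq x
        · rw [div_le_iff₀ h2n]; push_cast at hjle; linarith
        · rw [lt_div_iff₀ h2n]; push_cast at hjlt; linarith
      rw [hfx1, hfx0, hgx, if_pos (even_two_mul q)]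
      push_cast
      have e1 : (2:ℝ)^(2*(n+1)) = 2^(2*n) * 4 := by ring
      have e2 : (2:ℝ)^(n+1) = 2 * 2^n := by ring
      rw [e1, e2]
      field_simp
      ring
    · have hq : q < 2^n := by rw [pow_succ] at hjb; omega
      have hfx0 : f n x = ((2*(q:ℝ)+1)/2^n) * x - ((q:ℝ)^2 + q)/2^(2*n) := by
        apply hf n q hq x
        · rw [div_le_iff₀ h2n]; push_cast at hjle; linarith
        · rw [lt_div_iff₀ h2n]; push_cast at hjlt; linarith
      have hodd : ¬ Even (2*q+1) := by simp [Nat.even_iff, Nat.add_mod, Nat.mul_mod]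
      rw [hfx1, hfx0, hgx, if_neg hodd]
      push_cast
      have e1 : (2:ℝ)^(2*(n+1)) = 2^(2*n) * 4 := by ring
      have e2 : (2:ℝ)^(n+1) = 2 * 2^n := by ring
      have e3 : (2:ℝ)^(2*n) = 2^n * 2^n := by ring
      rw [e1, e2, e3]
      field_simp
      ring


lemma fNonneg (f : ℕ → ℝ → ℝ)
    (hf1 : ∀ n : ℕ, f n 1 = 1)
    (hf : ∀ n : ℕ, ∀ k : ℕ, k < 2^n → ∀ x : ℝ,
      (k : ℝ)/2^n ≤ x → x < ((k:ℝ)+1)/2^n →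
        f n x = ((2*(k:ℝ)+1)/2^n) * x - ((k:ℝ)^2 + k)/2^(2*n)) :
    ∀ n : ℕ, ∀ x ∈ Set.Icc (0:ℝ) 1, 0 ≤ f n x := by
  intro n x ⟨hx0, hx1⟩
  rcases eq_or_lt_of_le hx1 with rfl | hx1
  · rw [hf1]; norm_num
  · have h2n : (0:ℝ) < 2^n := by positivity
    obtain ⟨j, hjle, hjlt⟩ : ∃ j : ℕ, (j:ℝ) ≤ 2^n * x ∧ 2^n * x < (j:ℝ) + 1 :=
      ⟨⌊2^n * x⌋₊, Nat.floor_le (by positivity), Nat.lt_floor_add_one _⟩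
    have hjb : j < 2^n := by
      have h2 : (j:ℝ) < 2^n := by nlinarith
      exact_mod_cast (by push_cast; exact h2 : (j:ℝ) < ((2^n : ℕ) : ℝ))
    rw [hf n j hjb x (by rw [div_le_iff₀ h2n]; linarith) (by rw [lt_div_iff₀ h2n]; linarith)]
    have e3 : (2:ℝ)^(2*n) = 2^n * 2^n := by ring
    rw [e3, div_mul_eq_mul_div, div_sub_div _ _ (ne_of_gt h2n) (by positivity), le_div_iff₀ (by positivity)]
    have hj0 : (0:ℝ) ≤ (j:ℝ) := Nat.cast_nonneg j
    nlinarith [mul_le_mul_of_nonneg_left hjle (by linarith : (0:ℝ) ≤ 2*(j:ℝ)+1)]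



theorem stmt13
    (a : ℝ → ℝ) (ha : ∀ x : ℝ, a x = max x 0)
    (g : ℕ → ℝ → ℝ)
    (hg1 : ∀ x : ℝ, g 1 x =
      if 0 ≤ x ∧ x < 1/2 then 2*x else if 1/2 ≤ x ∧ x ≤ 1 then 2 - 2*x else 0)
    (hgrec : ∀ n : ℕ, 1 ≤ n → ∀ x : ℝ, g (n+1) x = g 1 (g n x))
    (f : ℕ → ℝ → ℝ)
    (hf1 : ∀ n : ℕ, f n 1 = 1)
    (hf : ∀ n : ℕ, ∀ k : ℕ, k < 2^n → ∀ x : ℝ,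
      (k : ℝ)/2^n ≤ x → x < ((k:ℝ)+1)/2^n →
        f n x = ((2*(k:ℝ)+1)/2^n) * x - ((k:ℝ)^2 + k)/2^(2*n))
    (r : ℕ → ℝ → Fin 4 → ℝ)
    (hr1 : ∀ x : ℝ, r 1 x 0 = a x ∧ r 1 x 1 = a (x - 1/2)
      ∧ r 1 x 2 = a (x - 1) ∧ r 1 x 3 = a x)
    (hrrec : ∀ k : ℕ, 1 ≤ k → ∀ x : ℝ,
      r (k+1) x 0 = a (2 * r k x 0 - 4 * r k x 1 + 2 * r k x 2)
      ∧ r (k+1) x 1 = a (2 * r k x 0 - 4 * r k x 1 + 2 * r k x 2 - 1/2)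
      ∧ r (k+1) x 2 = a (2 * r k x 0 - 4 * r k x 1 + 2 * r k x 2 - 1)
      ∧ r (k+1) x 3 = a ((-2:ℝ)^((3:ℤ) - 2*((k:ℤ)+1)) * r k x 0
          + (2:ℝ)^((4:ℤ) - 2*((k:ℤ)+1)) * r k x 1
          + (-2:ℝ)^((3:ℤ) - 2*((k:ℤ)+1)) * r k x 2 + r k x 3)) :
    ∀ k : ℕ, 1 ≤ k →
      (∀ x : ℝ, 2 * r k x 0 - 4 * r k x 1 + 2 * r k x 2 = g k x)
      ∧ (∀ x ∈ Set.Icc (0:ℝ) 1, r k x 3 = f (k-1) x)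
      ∧ (∀ x : ℝ, x ∉ Set.Icc (0:ℝ) 1 → r k x 3 = max x 0) := by
  have tent := tent_id g hg1
  have gz := gZero g hg1 hgrec
  have frec := fRec g hg1 hgrec f hf1 hf
  have fnn := fNonneg f hf1 hf
  have hf0 : ∀ x ∈ Set.Icc (0:ℝ) 1, f 0 x = x := by
    intro x ⟨hx0, hx1⟩
    rcases eq_or_lt_of_le hx1 with rfl | hx1
    · exact hf1 0
    · rw [hf 0 0 (by norm_num) x (by norm_num; exact hx0) (by norm_num; exact hx1)]
      norm_num
  intro k hk
  induction k, hk using Nat.le_induction with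
  | base =>
    refine ⟨?_, ?_, ?_⟩
    · intro x
      obtain ⟨h0, h1, h2, _⟩ := hr1 x
      rw [h0, h1, h2, ha, ha, ha]
      exact tent x
    · intro x hx
      obtain ⟨_, _, _, h3⟩ := hr1 x
      rw [h3, ha, hf0 x hx]
      exact max_eq_left hx.1
    · intro x hx
      obtain ⟨_, _, _, h3⟩ := hr1 x
      rw [h3, ha]
  | succ k hk ih =>
    obtain ⟨P1, P2, P3⟩ := ih
    have G : ∀ x : ℝ, 2 * r (k+1) x 0 - 4 * r (k+1) x 1 + 2 * r (k+1) x 2 = g (k+1) x := by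
      intro x
      obtain ⟨h0, h1, h2, _⟩ := hrrec k hk x
      rw [h0, h1, h2, ha, ha, ha, P1 x, tent (g k x)]
      exact (hgrec k hk x).symm
    have hodd : Odd ((3:ℤ) - 2*((k:ℤ)+1)) := ⟨-(k:ℤ), by ring⟩
    have e1 : (2:ℝ)^((3:ℤ) - 2*((k:ℤ)+1)) = 2 / 2^(2*k) := by
      rw [show (3:ℤ) - 2*((k:ℤ)+1) = 1 - ((2*k : ℕ) : ℤ) by push_cast; ring,
        zpow_sub₀ (two_ne_zero), zpow_one, zpow_natCast]
    have e2 : (2:ℝ)^((4:ℤ) - 2*((k:ℤ)+1)) = 4 / 2^(2*k) := by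
      rw [show (4:ℤ) - 2*((k:ℤ)+1) = 2 - ((2*k : ℕ) : ℤ) by push_cast; ring,
        zpow_sub₀ (two_ne_zero), zpow_natCast]
      norm_num
    have e3 : ((-2:ℝ))^((3:ℤ) - 2*((k:ℤ)+1)) = -(2 / 2^(2*k)) := by
      rw [hodd.neg_zpow, e1]
    have H4 : ∀ x : ℝ, r (k+1) x 3 = max (r k x 3 - g k x / 2^(2*k)) 0 := by
      intro x
      obtain ⟨_, _, _, h3⟩ := hrrec k hk x
      rw [h3, ha]
      congr 1
      rw [e3, e2, ← P1 x]
      have h2k : (0:ℝ) < 2^(2*k) := by positivity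
      field_simp
      ring
    refine ⟨G, ?_, ?_⟩
    · intro x hx
      have hk1 : k - 1 + 1 = k := by omega
      have hrec' := frec (k-1) x hx
      rw [hk1] at hrec'
      rw [H4 x, P2 x hx, show k + 1 - 1 = k from rfl, ← hrec']
      exact max_eq_left (fnn k x hx)
    · intro x hx
      have hx' : x < 0 ∨ 1 ≤ x := by
        simp only [Set.mem_Icc, not_and_or, not_le] at hx
        rcases hx with h | h
        exacts [Or.inl h, Or.inr h.le]
      rw [H4 x, P3 x hx, gz k hk x hx']
      norm_num
end
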